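/- With D, σ, u, R = D[t;σ], F as above: if f ∈ R is irreducible and h(t) = ĥ(u^{-1} t^n) is its minimal central left multiple with ĥ ∈ F[x] monic, then ĥ is irreducible in F[x]. -/

import Mathlib

/-!
Evaluation at the central element `w = u⁻¹tⁿ` is a ring homomorphism `ψ : F[x] → Z(R)`, and
`ψ p` has `t`-degree `n · deg p`. Right division with remainder makes `R = D[t;σ]` a principal
left ideal ring, and there an irreducible `f` behaves like a prime towards central elements:
writing `Rf + Ra = Rg`, either `g` is a unit multiple of `f`, so `a ∈ Rf`, or `1 = xf + ya`,
so `c = cxf + y(ca) ∈ Rf` whenever `c` is central with `ca ∈ Rf`. Hence if `ĥ = pq` then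
`ψ p` or `ψ q` lies in `Rf`, and the minimality of `ψ ĥ` forces the other factor to have degree
zero.
-/

open Polynomial

structure IsSkewPolynomialRing {D R : Type*} [Semiring D] [Semiring R] (σ : D ≃+* D)
    (ι : D →+* R) (t : R) (coeff : R →+ (ℕ →₀ D)) : Prop where
  t_mul : ∀ a : D, t * ι a = ι (σ a) * t
  coeff_monomial : ∀ (a : D) (i : ℕ), coeff (ι a * t ^ i) = Finsupp.single i a
  sum_coeff : ∀ x : R, (coeff x).sum (fun i a => ι a * t ^ i) = x

noncomputable def skewNatDegree {D R : Type*} [AddCommMonoid D] [AddCommMonoid R]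
    (coeff : R →+ (ℕ →₀ D)) (x : R) : ℕ :=
  (coeff x).support.sup id

section skewNatDegree

variable {D R : Type*} [AddCommMonoid D] [AddCommMonoid R] {coeff : R →+ (ℕ →₀ D)} {x : R}
  {j m : ℕ}

theorem le_skewNatDegree (h : coeff x j ≠ 0) : j ≤ skewNatDegree coeff x :=
  Finset.le_sup (f := id) (Finsupp.mem_support_iff.mpr h)

theorem coeff_eq_zero_of_skewNatDegree_lt (h : skewNatDegree coeff x < j) : coeff x j = 0 := by
  by_contra hj
  exact (le_skewNatDegree hj).not_gt h

theorem skewNatDegree_eq_of_coeff (hm : coeff x m ≠ 0) (h : ∀ j, m < j → coeff x j = 0) :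
    skewNatDegree coeff x = m :=
  le_antisymm (Finset.sup_le fun j hj => not_lt.mp fun hmj =>
    Finsupp.mem_support_iff.mp hj (h j hmj)) (le_skewNatDegree hm)

end skewNatDegree

namespace IsSkewPolynomialRing

section Semiring

variable {D R : Type*} [Semiring D] [Semiring R] {σ : D ≃+* D} {ι : D →+* R} {t : R}
  {coeff : R →+ (ℕ →₀ D)} (hR : IsSkewPolynomialRing σ ι t coeff)
include hR

theorem t_pow_mul (i : ℕ) (a : D) : t ^ i * ι a = ι ((σ ^ i) a) * t ^ i := by
  induction i generalizing a with
  | zero => simp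
  | succ i ih =>
    rw [pow_succ, mul_assoc, hR.t_mul, ← mul_assoc, ih, mul_assoc, ← pow_succ]
    rfl

theorem monomial_mul_monomial (a b : D) (i j : ℕ) :
    ι a * t ^ i * (ι b * t ^ j) = ι (a * (σ ^ i) b) * t ^ (i + j) := by
  rw [mul_assoc, ← mul_assoc (t ^ i), hR.t_pow_mul, map_mul, mul_assoc, mul_assoc, ← pow_add]

theorem coeff_injective : Function.Injective coeff := fun x y h => by
  rw [← hR.sum_coeff x, ← hR.sum_coeff y, h]

theorem coeff_skewNatDegree_ne_zero {x : R} (hx : x ≠ 0) :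
    coeff x (skewNatDegree coeff x) ≠ 0 := by
  have hsupp : (coeff x).support.Nonempty :=
    Finsupp.support_nonempty_iff.mpr fun h => hx (hR.coeff_injective (by rw [h, map_zero]))
  obtain ⟨i, hi, hmax⟩ := Finset.exists_mem_eq_sup _ hsupp id
  rw [skewNatDegree, hmax]
  exact Finsupp.mem_support_iff.mp hi

theorem eq_zero_or_skewNatDegree_lt {x : R} {m : ℕ} (h : ∀ j, m ≤ j → coeff x j = 0) :
    x = 0 ∨ skewNatDegree coeff x < m :=
  or_iff_not_imp_left.mpr fun hx => not_le.mp fun hm =>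
    hR.coeff_skewNatDegree_ne_zero hx (h _ hm)

theorem coeff_mul (x y : R) (k : ℕ) :
    coeff (x * y) k = (coeff x).sum fun i a => (coeff y).sum fun j b =>
      if i + j = k then a * (σ ^ i) b else 0 := by
  conv_lhs => rw [← hR.sum_coeff x, ← hR.sum_coeff y]
  simp only [Finsupp.sum_mul, Finsupp.mul_sum, hR.monomial_mul_monomial, map_finsuppSum,
    hR.coeff_monomial, Finsupp.sum_apply, Finsupp.single_apply]
  exact Finset.sum_comm

theorem coeff_monomial_mul (c : D) (i : ℕ) (y : R) (k : ℕ) :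
    coeff (ι c * t ^ i * y) (i + k) = c * (σ ^ i) (coeff y k) := by
  rw [hR.coeff_mul, hR.coeff_monomial, Finsupp.sum_single_index (by simp)]
  simp only [add_right_inj, Finsupp.sum_ite_eq']
  split_ifs with hk
  · rfl
  · rw [Finsupp.notMem_support_iff.mp hk, map_zero, mul_zero]

theorem coeff_mul_skewNatDegree_add (x y : R) :
    coeff (x * y) (skewNatDegree coeff x + skewNatDegree coeff y) =
      coeff x (skewNatDegree coeff x) *
        (σ ^ skewNatDegree coeff x) (coeff y (skewNatDegree coeff y)) := by
  rw [hR.coeff_mul, Finsupp.sum_eq_single (skewNatDegree coeff x),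
    Finsupp.sum_eq_single (skewNatDegree coeff y)]
  · simp
  · intro j _ hj
    rw [if_neg (by omega)]
  · simp
  · intro i hi hix
    refine Finset.sum_eq_zero fun j hj => if_neg ?_
    have := le_skewNatDegree hi
    have := le_skewNatDegree (Finsupp.mem_support_iff.mp hj)
    omega
  · simp

theorem noZeroDivisors [NoZeroDivisors D] : NoZeroDivisors R where
  eq_zero_or_eq_zero_of_mul_eq_zero {x y} hxy := by
    by_contra! h
    apply mul_ne_zero (hR.coeff_skewNatDegree_ne_zero h.1)
      ((map_ne_zero_iff _ (σ ^ _).injective).mpr (hR.coeff_skewNatDegree_ne_zero h.2))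
    rw [← hR.coeff_mul_skewNatDegree_add, hxy, map_zero, Finsupp.coe_zero, Pi.zero_apply]

theorem monomial_pow {v : D} {n : ℕ} (hv : (σ ^ n) v = v) (k : ℕ) :
    (ι v * t ^ n) ^ k = ι (v ^ k) * t ^ (n * k) := by
  induction k with
  | zero => simp
  | succ k ih =>
    rw [pow_succ', ih, hR.monomial_mul_monomial, map_pow, hv, ← pow_succ', mul_add_one,
      add_comm (n * k)]

theorem coeff_eval₂_monomial (p : D[X]) {v : D} {n : ℕ} (hv : (σ ^ n) v = v) :
    coeff (p.eval₂ ι (ι v * t ^ n)) = p.sum fun k a => Finsupp.single (n * k) (a * v ^ k) := by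
  simp only [eval₂_eq_sum, Polynomial.sum_def, map_sum, hR.monomial_pow hv, ← mul_assoc,
    ← map_mul, hR.coeff_monomial]

theorem coeff_eval₂_monomial_eq_zero (p : D[X]) {v : D} {n j : ℕ} (hv : (σ ^ n) v = v)
    (hj : n * p.natDegree < j) : coeff (p.eval₂ ι (ι v * t ^ n)) j = 0 := by
  rw [hR.coeff_eval₂_monomial p hv, Polynomial.sum_def, Finsupp.finsetSum_apply]
  refine Finset.sum_eq_zero fun k hk => Finsupp.single_eq_of_ne ?_
  have := Nat.mul_le_mul_left n (le_natDegree_of_mem_supp k hk)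
  omega

variable [NoZeroDivisors D] {p : D[X]} {v : D} {n : ℕ}

theorem coeff_eval₂_monomial_natDegree_ne_zero (hp : p ≠ 0) (hv0 : v ≠ 0) (hn : 0 < n)
    (hv : (σ ^ n) v = v) : coeff (p.eval₂ ι (ι v * t ^ n)) (n * p.natDegree) ≠ 0 := by
  rw [hR.coeff_eval₂_monomial p hv, Polynomial.sum_def, Finsupp.finsetSum_apply,
    Finset.sum_eq_single_of_mem p.natDegree (natDegree_mem_support_of_nonzero hp)]
  · rw [Finsupp.single_eq_same]
    exact mul_ne_zero (leadingCoeff_ne_zero.mpr hp) (pow_ne_zero _ hv0)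
  · intro k _ hk
    exact Finsupp.single_eq_of_ne (by simpa [hn.ne'] using Ne.symm hk)

theorem eval₂_monomial_ne_zero (hp : p ≠ 0) (hv0 : v ≠ 0) (hn : 0 < n) (hv : (σ ^ n) v = v) :
    p.eval₂ ι (ι v * t ^ n) ≠ 0 := fun h =>
  hR.coeff_eval₂_monomial_natDegree_ne_zero hp hv0 hn hv (by rw [h, map_zero]; rfl)

theorem skewNatDegree_eval₂_monomial (hp : p ≠ 0) (hv0 : v ≠ 0) (hn : 0 < n)
    (hv : (σ ^ n) v = v) : skewNatDegree coeff (p.eval₂ ι (ι v * t ^ n)) = n * p.natDegree :=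
  skewNatDegree_eq_of_coeff (hR.coeff_eval₂_monomial_natDegree_ne_zero hp hv0 hn hv)
    fun _ => hR.coeff_eval₂_monomial_eq_zero p hv

end Semiring

section Ring

variable {D R : Type*} [Ring D] [Ring R] {σ : D ≃+* D} {ι : D →+* R} {t : R}
  {coeff : R →+ (ℕ →₀ D)} (hR : IsSkewPolynomialRing σ ι t coeff)
include hR

theorem mem_center_of_commute {z : R} (hι : ∀ a : D, Commute z (ι a)) (ht : Commute z t) :
    z ∈ Subring.center R := by
  refine Subring.mem_center_iff.mpr fun x => (?_ : Commute z x).symm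
  rw [← hR.sum_coeff x]
  exact Commute.sum_right _ _ _ fun i _ => (hι _).mul_right (ht.pow_right i)

theorem map_mem_center {a : D} (ha : a ∈ Subring.center D) (hσa : σ a = a) :
    ι a ∈ Subring.center R :=
  hR.mem_center_of_commute
    (fun b => by rw [Commute, SemiconjBy, ← map_mul, ← map_mul, Subring.mem_center_iff.mp ha b])
    (by rw [Commute, SemiconjBy, hR.t_mul, hσa])

end Ring

section DivisionRing

variable {D R : Type*} [DivisionRing D] [Ring R] {σ : D ≃+* D} {ι : D →+* R} {t : R}
  {coeff : R →+ (ℕ →₀ D)} (hR : IsSkewPolynomialRing σ ι t coeff)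
include hR

theorem inv_mul_t_pow_mem_center {u : D} {n : ℕ} (hu : u ≠ 0) (hσu : σ u = u)
    (hinner : ∀ z : D, (σ ^ n) z = u * z * u⁻¹) : ι u⁻¹ * t ^ n ∈ Subring.center R := by
  refine hR.mem_center_of_commute (fun b => ?_) ?_
  · rw [Commute, SemiconjBy, mul_assoc, hR.t_pow_mul, hinner, ← mul_assoc, ← map_mul,
      ← mul_assoc, ← mul_assoc, inv_mul_cancel₀ hu, one_mul, map_mul, mul_assoc]
  · rw [Commute, SemiconjBy, mul_assoc, ← pow_succ, ← mul_assoc, hR.t_mul, map_inv₀ σ, hσu,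
      mul_assoc, ← pow_succ']

theorem exists_eq_mul_add {b : R} (hb : b ≠ 0) (a : R) :
    ∃ q r, a = q * b + r ∧ (r = 0 ∨ skewNatDegree coeff r < skewNatDegree coeff b) := by
  set l := skewNatDegree coeff b
  suffices ∀ N a, (∀ j, N ≤ j → coeff a j = 0) →
      ∃ q r, a = q * b + r ∧ (r = 0 ∨ skewNatDegree coeff r < l) from
    this _ a fun j hj => coeff_eq_zero_of_skewNatDegree_lt hj
  intro N
  induction N with
  | zero =>
    exact fun a ha => ⟨0, a, by simp, hR.eq_zero_or_skewNatDegree_lt fun j _ => ha j j.zero_le⟩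
  | succ N ih =>
    intro a ha
    by_cases hN : N < l
    · exact ⟨0, a, by simp, hR.eq_zero_or_skewNatDegree_lt fun j hj => ha j (by omega)⟩
    obtain ⟨k, rfl⟩ : ∃ k, N = k + l := ⟨N - l, by omega⟩
    -- `ι c * t ^ k * b` has the same coefficient as `a` in degree `k + l`
    set c := coeff a (k + l) * ((σ ^ k) (coeff b l))⁻¹
    have hlead : (σ ^ k) (coeff b l) ≠ 0 :=
      (map_ne_zero_iff _ (σ ^ k).injective).mpr (hR.coeff_skewNatDegree_ne_zero hb)
    obtain ⟨q, r, hq, hr⟩ := ih (a - ι c * t ^ k * b) fun j hj => by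
      obtain ⟨i, rfl⟩ : ∃ i, j = k + i := ⟨j - k, by omega⟩
      rw [map_sub, Finsupp.sub_apply, hR.coeff_monomial_mul]
      rcases (show l ≤ i by omega).eq_or_lt with rfl | hli
      · rw [inv_mul_cancel_right₀ hlead, sub_self]
      · rw [ha _ (by omega), coeff_eq_zero_of_skewNatDegree_lt hli, map_zero, mul_zero,
          sub_zero]
    exact ⟨ι c * t ^ k + q, r, by rw [add_mul, add_assoc, ← hq, add_sub_cancel], hr⟩

theorem isPrincipalIdealRing : IsPrincipalIdealRing R := by
  refine ⟨fun I => ?_⟩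
  by_cases hI : I = ⊥
  · exact hI ▸ bot_isPrincipal
  obtain ⟨g, ⟨hgI, hg0⟩, hmin⟩ := (measure (skewNatDegree coeff)).wf.has_min
    {g | g ∈ I ∧ g ≠ 0} (Submodule.exists_mem_ne_zero_of_ne_bot hI)
  refine ⟨g, le_antisymm (fun a ha => ?_) ((Ideal.span_singleton_le_iff_mem _).mpr hgI)⟩
  obtain ⟨q, r, rfl, hr⟩ := hR.exists_eq_mul_add hg0 a
  have hrI : r ∈ I := by simpa using I.sub_mem ha (I.mul_mem_left q hgI)
  have hr0 : r = 0 := by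
    by_contra hr0
    exact hmin r ⟨hrI, hr0⟩ (hr.resolve_left hr0)
  rw [hr0, add_zero]
  exact Ideal.mul_mem_left _ _ (Ideal.mem_span_singleton_self g)

end DivisionRing

end IsSkewPolynomialRing

theorem Irreducible.mem_span_singleton_or_of_mul_mem {R : Type*} [Ring R]
    [IsPrincipalIdealRing R] {f a c : R} (hf : Irreducible f) (hc : c ∈ Subring.center R)
    (hca : c * a ∈ Ideal.span {f}) : a ∈ Ideal.span {f} ∨ c ∈ Ideal.span {f} := by
  set g := Submodule.IsPrincipal.generator (Ideal.span {f, a})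
  have hJ : Ideal.span {g} = Ideal.span {f, a} :=
    Submodule.IsPrincipal.span_singleton_generator _
  have hfJ : f ∈ Ideal.span {g} := hJ ▸ Ideal.subset_span (Set.mem_insert f {a})
  have haJ : a ∈ Ideal.span {g} := hJ ▸ Ideal.subset_span (Set.mem_insert_of_mem f rfl)
  obtain ⟨q, hq⟩ := Ideal.mem_span_singleton'.mp hfJ
  rcases hf.isUnit_or_isUnit hq.symm with ⟨q', rfl⟩ | ⟨g', hg'⟩
  · left
    obtain ⟨b, hb⟩ := Ideal.mem_span_singleton'.mp haJ
    exact Ideal.mem_span_singleton'.mpr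
      ⟨b * ↑q'⁻¹, by rw [← hq, mul_assoc, Units.inv_mul_cancel_left, hb]⟩
  · right
    have h1 : (1 : R) ∈ Ideal.span {g} :=
      Ideal.mem_span_singleton'.mpr ⟨↑g'⁻¹, by rw [← hg', Units.inv_mul]⟩
    obtain ⟨x, y, hxy⟩ := Ideal.mem_span_pair.mp (hJ ▸ h1)
    rw [← mul_one c, ← hxy, mul_add, ← mul_assoc, ← mul_assoc,
      (Subring.mem_center_iff.mp hc y).symm, mul_assoc y]
    exact add_mem (Ideal.mul_mem_left _ _ (Ideal.mem_span_singleton_self f))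
      (Ideal.mul_mem_left _ _ hca)

namespace Polynomial

theorem isUnit_of_natDegree_eq_zero {K : Type*} [DivisionSemiring K] {p : K[X]} (hp : p ≠ 0)
    (h : p.natDegree = 0) : IsUnit p := by
  obtain ⟨x, rfl⟩ := natDegree_eq_zero.mp h
  exact isUnit_C.mpr (Ne.isUnit (by rintro rfl; exact hp C_0))

theorem eval₂_mem_center {K R : Type*} [Semiring K] [Ring R] {φ : K →+* R}
    (hφ : ∀ a, φ a ∈ Subring.center R) {x : R} (hx : x ∈ Subring.center R) (p : K[X]) :
    p.eval₂ φ x ∈ Subring.center R := by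
  rw [eval₂_eq_sum, Polynomial.sum_def]
  exact Subring.sum_mem _ fun k _ => Subring.mul_mem _ (hφ _) (Subring.pow_mem _ hx k)

theorem irreducible_of_natDegree_minimal {K R : Type*} [DivisionRing K] [Ring R]
    [IsPrincipalIdealRing R] [IsDedekindFiniteMonoid R] {ψ : K[X] →+* R}
    (hψ : ∀ p, ψ p ∈ Subring.center R) {f : R} (hf : Irreducible f) {h : K[X]} (h0 : h ≠ 0)
    (hh : ψ h ∈ Ideal.span {f})
    (hmin : ∀ p, p ≠ 0 → ψ p ∈ Ideal.span {f} → h.natDegree ≤ p.natDegree) :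
    Irreducible h := by
  obtain ⟨g, hg⟩ := Ideal.mem_span_singleton'.mp hh
  refine ⟨fun hunit => hf.not_isUnit (isUnit_of_mul_isUnit_right (hg ▸ hunit.map ψ)),
    fun p q hpq => ?_⟩
  have hp : p ≠ 0 := by rintro rfl; exact h0 (by rw [hpq, zero_mul])
  have hq : q ≠ 0 := by rintro rfl; exact h0 (by rw [hpq, mul_zero])
  have hdeg : h.natDegree = p.natDegree + q.natDegree := hpq ▸ natDegree_mul hp hq
  rw [hpq, map_mul] at hh
  rcases hf.mem_span_singleton_or_of_mul_mem (hψ p) hh with hqf | hpf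
  · have := hmin q hq hqf
    exact Or.inl (isUnit_of_natDegree_eq_zero hp (by omega))
  · have := hmin p hp hpf
    exact Or.inr (isUnit_of_natDegree_eq_zero hq (by omega))

end Polynomial

theorem mclm_of_irreducible_is_irreducible_division_algebra_general
    (D : Type) [DivisionRing D]
    (n : ℕ) (hn : 0 < n)
    (σ : D ≃+* D) (u : D) (hu0 : u ≠ 0) (hσu : σ u = u)
    (hinner : ∀ z : D, (σ ^ n) z = u * z * u⁻¹)
    -- F = C ∩ Fix(σ), a (commutative) subfield of D:
    (F : Subfield D) (hF : ∀ z : D, z ∈ F ↔ (z ∈ Subring.center D ∧ σ z = z))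
    -- R = D[t;σ]:
    (R : Type) [Ring R] (ι : D →+* R) (t : R)
    (hmul : ∀ a : D, t * ι a = ι (σ a) * t)
    (coeff : R →+ (ℕ →₀ D))
    (hcoeff : ∀ (a : D) (i : ℕ), coeff (ι a * t ^ i) = Finsupp.single i a)
    (hrepr : ∀ x : R, (coeff x).sum (fun i a => ι a * t ^ i) = x)
    (f : R) (hf : Irreducible f)
    -- ĥ ∈ F[x] monic with h(t) = ĥ(u⁻¹t^n) the minimal central left multiple of f:
    (hhat : Polynomial F) (hmonic : hhat.Monic)
    (hleft : ∃ g : R, (hhat.sum fun k a => ι (a : D) * (ι u⁻¹ * t ^ n) ^ k) = g * f)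
    (hminimal : ∀ c : R, c ∈ Subring.center R → c ≠ 0 → (∃ g : R, c = g * f) →
      (coeff (hhat.sum fun k a => ι (a : D) * (ι u⁻¹ * t ^ n) ^ k)).support.sup id ≤
        (coeff c).support.sup id) :
    Irreducible hhat := by
  have hR : IsSkewPolynomialRing σ ι t coeff := ⟨hmul, hcoeff, hrepr⟩
  have := hR.isPrincipalIdealRing
  have := hR.noZeroDivisors
  have hw : ι u⁻¹ * t ^ n ∈ Subring.center R := hR.inv_mul_t_pow_mem_center hu0 hσu hinner
  have hσw : (σ ^ n) u⁻¹ = u⁻¹ := by rw [hinner, mul_inv_cancel₀ hu0, one_mul]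
  let ψ : F[X] →+* R :=
    eval₂RingHom' (ι.comp F.subtype) _ fun _ => Subring.mem_center_iff.mp hw _
  have hψ_sum (p : F[X]) : ψ p = p.sum fun k a => ι (a : D) * (ι u⁻¹ * t ^ n) ^ k :=
    eval₂_eq_sum
  have hψ_center (p : F[X]) : ψ p ∈ Subring.center R :=
    eval₂_mem_center (fun a : F => hR.map_mem_center ((hF a).mp a.2).1 ((hF a).mp a.2).2) hw p
  have hψ_deg {p : F[X]} (hp : p ≠ 0) :
      ψ p ≠ 0 ∧ skewNatDegree coeff (ψ p) = n * p.natDegree := by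
    have hp' := (Polynomial.map_ne_zero_iff F.subtype_injective).mpr hp
    rw [show ψ p = _ from (eval₂_map _ _ _).symm, ← natDegree_map F.subtype]
    exact ⟨hR.eval₂_monomial_ne_zero hp' (inv_ne_zero hu0) hn hσw,
      hR.skewNatDegree_eval₂_monomial hp' (inv_ne_zero hu0) hn hσw⟩
  obtain ⟨g₀, hg₀⟩ := hleft
  refine irreducible_of_natDegree_minimal hψ_center hf hmonic.ne_zero
    (Ideal.mem_span_singleton'.mpr ⟨g₀, ((hψ_sum hhat).trans hg₀).symm⟩) fun p hp hpf => ?_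
  obtain ⟨g, hg⟩ := Ideal.mem_span_singleton'.mp hpf
  have hmin := hminimal (ψ p) (hψ_center p) (hψ_deg hp).1 ⟨g, hg.symm⟩
  rw [← hψ_sum] at hmin
  change skewNatDegree coeff (ψ hhat) ≤ skewNatDegree coeff (ψ p) at hmin
  rw [(hψ_deg hmonic.ne_zero).2, (hψ_deg hp).2] at hmin
  exact Nat.le_of_mul_le_mul_left hmin hn

/-- With `D, σ, u, R = D[t;σ], F = C ∩ Fix(σ)` as above: if `f ∈ R` is
irreducible and `h(t) = ĥ(u⁻¹t^n)` is its minimal central left multiple with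
`ĥ ∈ F[x]` monic, then `ĥ` is irreducible in `F[x]`. -/
theorem mclm_of_irreducible_is_irreducible_division_algebra
    (D : Type) [DivisionRing D] (d : ℕ) (hd : Module.finrank (Subring.center D) D = d * d)
    (n : ℕ) (hn : 0 < n)
    (σ : D ≃+* D) (u : D) (hu0 : u ≠ 0) (hσu : σ u = u)
    (hinner : ∀ z : D, (σ ^ n) z = u * z * u⁻¹)
    (horder : IsLeast {m : ℕ | 0 < m ∧ ∀ z ∈ Subring.center D, (σ ^ m) z = z} n)
    -- F = C ∩ Fix(σ), a (commutative) subfield of D: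
    (F : Subfield D) (hF : ∀ z : D, z ∈ F ↔ (z ∈ Subring.center D ∧ σ z = z))
    -- R = D[t;σ]:
    (R : Type) [Ring R] (ι : D →+* R) (t : R)
    (hmul : ∀ a : D, t * ι a = ι (σ a) * t)
    (coeff : R →+ (ℕ →₀ D))
    (hcoeff : ∀ (a : D) (i : ℕ), coeff (ι a * t ^ i) = Finsupp.single i a)
    (hrepr : ∀ x : R, (coeff x).sum (fun i a => ι a * t ^ i) = x)
    (f : R) (hf : Irreducible f)
    -- ĥ ∈ F[x] monic with h(t) = ĥ(u⁻¹t^n) the minimal central left multiple of f: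
    (hhat : Polynomial F) (hmonic : hhat.Monic)
    (hleft : ∃ g : R, (hhat.sum fun k a => ι (a : D) * (ι u⁻¹ * t ^ n) ^ k) = g * f)
    (hcentral : (hhat.sum fun k a => ι (a : D) * (ι u⁻¹ * t ^ n) ^ k) ∈ Subring.center R)
    (hminimal : ∀ c : R, c ∈ Subring.center R → c ≠ 0 → (∃ g : R, c = g * f) →
      (coeff (hhat.sum fun k a => ι (a : D) * (ι u⁻¹ * t ^ n) ^ k)).support.sup id ≤
        (coeff c).support.sup id) :
    Irreducible hhat :=
  mclm_of_irreducible_is_irreducible_division_algebra_general D n hn σ u hu0 hσu hinner F hF R ι t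
    hmul coeff hcoeff hrepr f hf hhat hmonic hleft hminimal
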